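/- arXiv:1603.05697 — 4 statements merged into one kernel-verified Lean document; each statement's English description precedes it below -/
import Mathlib

section
/- Let V : (0, ∞) → Matrix (Fin m) (Fin m) ℝ be a differentiable, symmetric-valued solution of the Riccati equation V' + V² + K = 0, where K(t) is symmetric and K(t) ≥ −k²·I (as quadratic forms) for all t > 0 and some k > 0. Then the operator norm satisfies ‖V(t)‖ ≤ k·coth(k t) for all t > 0. -/
open Matrix MeasureTheory

noncomputable section

attribute [local instance] Matrix.normedAddCommGroup Matrix.normedSpace

/-- The operator (spectral) norm of a real square matrix. -/
def opNorm {m : ℕ} (M : Matrix (Fin m) (Fin m) ℝ) : ℝ :=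
  ‖Matrix.toEuclideanCLM (𝕜 := ℝ) M‖

/-!
Along a fixed vector `x`, the Rayleigh quotient `f t = ⟪V t x, x⟫ / ‖x‖²` satisfies
`f' = -(‖V x‖² + ⟪K x, x⟫) / ‖x‖² ≤ k² - f²` by Cauchy–Schwarz. The functions
`k coth (k (t - c))` solve `g' = k² - g²` and blow up at `t = c`, so comparing `f` with them
(started just after a pole at `c ↓ 0`, or run into a pole at `c → ∞`) gives
`-k ≤ f t ≤ k coth (k t)`. The comparison needs a strict inequality, obtained by replacing
`k` by `k + ε`. For symmetric `V t` the norm is the supremum of `|f t|` over `x`.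
-/

open Filter Topology Set
open scoped InnerProductSpace ComplexOrder

namespace Real

def coth (x : ℝ) : ℝ := cosh x / sinh x

theorem hasDerivAt_coth {x : ℝ} (hx : x ≠ 0) : HasDerivAt coth (1 - coth x ^ 2) x := by
  have hs : sinh x ≠ 0 := sinh_ne_zero.mpr hx
  refine ((hasDerivAt_cosh x).div (hasDerivAt_sinh x) hs).congr_deriv ?_
  rw [coth]
  field_simp

theorem tendsto_coth_atBot : Tendsto coth atBot (𝓝 (-1)) := by
  have hexp : Tendsto (fun x => exp (2 * x)) atBot (𝓝 0) :=
    tendsto_exp_atBot.comp (tendsto_id.const_mul_atBot two_pos)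
  have hlim := (hexp.add_const 1).div (hexp.sub_const 1) (by norm_num)
  norm_num at hlim
  refine hlim.congr' (eventually_lt_atBot 0 |>.mono fun x hx => ?_)
  have hs : sinh x ≠ 0 := sinh_ne_zero.mpr hx.ne
  rw [sinh_eq, exp_neg] at hs
  rw [Pi.div_apply, coth, cosh_eq, sinh_eq, exp_neg, two_mul, exp_add]
  field_simp

theorem one_le_coth {x : ℝ} (hx : 0 < x) : 1 ≤ coth x :=
  (one_le_div (sinh_pos_iff.mpr hx)).mpr (sinh_lt_cosh x).le

theorem tendsto_coth_nhdsGT_zero : Tendsto coth (𝓝[>] 0) atTop := by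
  have hsinh : Tendsto sinh (𝓝[>] 0) (𝓝[>] 0) :=
    tendsto_nhdsWithin_of_tendsto_nhds_of_eventually_within _
      (by simpa using (continuous_sinh.tendsto 0).mono_left nhdsWithin_le_nhds)
      (eventually_nhdsWithin_of_forall fun _ hx => sinh_pos_iff.mpr hx)
  exact (continuous_cosh.tendsto 0).mono_left nhdsWithin_le_nhds |>.pos_mul_atTop
    (by simp) (tendsto_inv_nhdsGT_zero.comp hsinh)

theorem tendsto_coth_nhdsLT_zero : Tendsto coth (𝓝[<] 0) atBot := by
  have hsinh : Tendsto sinh (𝓝[<] 0) (𝓝[<] 0) :=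
    tendsto_nhdsWithin_of_tendsto_nhds_of_eventually_within _
      (by simpa using (continuous_sinh.tendsto 0).mono_left nhdsWithin_le_nhds)
      (eventually_nhdsWithin_of_forall fun _ hx => sinh_neg_iff.mpr hx)
  exact (continuous_cosh.tendsto 0).mono_left nhdsWithin_le_nhds |>.pos_mul_atBot
    (by simp) (tendsto_inv_nhdsLT_zero.comp hsinh)

theorem hasDerivAt_mul_coth {k c x : ℝ} (hk : k ≠ 0) (hx : x ≠ c) :
    HasDerivAt (fun y => k * coth (k * (y - c))) (k ^ 2 - (k * coth (k * (x - c))) ^ 2) x := by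
  have hkx : k * (x - c) ≠ 0 := mul_ne_zero hk (sub_ne_zero.mpr hx)
  have hlin : HasDerivAt (fun y => k * (y - c)) k x := by
    simpa using ((hasDerivAt_id x).sub_const c).const_mul k
  refine (((hasDerivAt_coth hkx).comp x hlin).const_mul k).congr_deriv ?_
  ring

theorem tendsto_mul_coth_nhdsGT {k c : ℝ} (hk : 0 < k) :
    Tendsto (fun y => k * coth (k * (y - c))) (𝓝[>] c) atTop := by
  have hcont : Tendsto (fun y => k * (y - c)) (𝓝[>] c) (𝓝 0) := by
    simpa using (((continuous_sub_right c).tendsto c).const_mul k).mono_left nhdsWithin_le_nhds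
  have hlin : Tendsto (fun y => k * (y - c)) (𝓝[>] c) (𝓝[>] 0) :=
    tendsto_nhdsWithin_of_tendsto_nhds_of_eventually_within _ hcont
      (eventually_nhdsWithin_of_forall fun _ hy => mul_pos hk (sub_pos.mpr hy))
  exact (tendsto_coth_nhdsGT_zero.comp hlin).const_mul_atTop hk

theorem tendsto_mul_coth_nhdsLT {k c : ℝ} (hk : 0 < k) :
    Tendsto (fun y => k * coth (k * (y - c))) (𝓝[<] c) atBot := by
  have hcont : Tendsto (fun y => k * (y - c)) (𝓝[<] c) (𝓝 0) := by
    simpa using (((continuous_sub_right c).tendsto c).const_mul k).mono_left nhdsWithin_le_nhds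
  have hlin : Tendsto (fun y => k * (y - c)) (𝓝[<] c) (𝓝[<] 0) :=
    tendsto_nhdsWithin_of_tendsto_nhds_of_eventually_within _ hcont
      (eventually_nhdsWithin_of_forall fun _ hy => mul_neg_of_pos_of_neg hk (sub_neg.mpr hy))
  exact (tendsto_coth_nhdsLT_zero.comp hlin).const_mul_atBot hk

theorem tendsto_mul_coth_sub_atTop {k : ℝ} (hk : 0 < k) (t : ℝ) :
    Tendsto (fun c => k * coth (k * (t - c))) atTop (𝓝 (-k)) := by
  have hlin : Tendsto (fun c => k * (t - c)) atTop atBot :=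
    (tendsto_atBot_add_const_left _ t tendsto_neg_atTop_atBot).const_mul_atBot hk
  simpa using (tendsto_coth_atBot.comp hlin).const_mul k

end Real

open Real

def RiccatiSubsolution (k : ℝ) (f : ℝ → ℝ) (s : Set ℝ) : Prop :=
  ∀ t ∈ s, DifferentiableAt ℝ f t ∧ deriv f t ≤ k ^ 2 - f t ^ 2

namespace RiccatiSubsolution

variable {f g : ℝ → ℝ} {k₀ k a b c : ℝ} {s s' : Set ℝ}

theorem mono (hf : RiccatiSubsolution k f s) (hs : s' ⊆ s) : RiccatiSubsolution k f s' :=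
  fun x hx => hf x (hs hx)

theorem continuousOn (hf : RiccatiSubsolution k f s) : ContinuousOn f s :=
  fun x hx => (hf x hx).1.continuousAt.continuousWithinAt

theorem le_of_hasDerivAt (hf : RiccatiSubsolution k₀ f (Icc a b))
    (hg : ∀ x ∈ Icc a b, HasDerivAt g (k ^ 2 - g x ^ 2) x) (hk : k₀ ^ 2 < k ^ 2)
    (ha : f a ≤ g a) : ∀ x ∈ Icc a b, f x ≤ g x :=
  image_le_of_deriv_right_lt_deriv_boundary' hf.continuousOn
    (fun x hx => (hf x (Ico_subset_Icc_self hx)).1.hasDerivAt.hasDerivWithinAt) ha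
    (HasDerivAt.continuousOn hg)
    (fun x hx => (hg x (Ico_subset_Icc_self hx)).hasDerivWithinAt)
    fun x hx hfg => by
      have hfx := (hf x (Ico_subset_Icc_self hx)).2
      rw [hfg] at hfx
      linarith

theorem le_mul_coth (hf : RiccatiSubsolution k₀ f (Icc c b)) (hk₀ : k₀ ^ 2 < k ^ 2)
    (hk : 0 < k) (hcb : c < b) : f b ≤ k * coth (k * (b - c)) := by
  obtain ⟨B, hB⟩ := isCompact_Icc.bddAbove_image hf.continuousOn
  obtain ⟨a, hBa, hca, hab⟩ :=
    (((tendsto_mul_coth_nhdsGT hk).eventually_gt_atTop B).and (Ioo_mem_nhdsGT hcb)).exists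
  refine (hf.mono (Icc_subset_Icc hca.le le_rfl)).le_of_hasDerivAt
    (fun x hx => hasDerivAt_mul_coth hk.ne' (hca.trans_le hx.1).ne') hk₀
    ((hB ⟨a, ⟨hca.le, hab.le⟩, rfl⟩).trans hBa.le) b ⟨hab.le, le_rfl⟩

theorem mul_coth_le (hf : RiccatiSubsolution k₀ f (Icc a c)) (hk₀ : k₀ ^ 2 < k ^ 2)
    (hk : 0 < k) (hac : a < c) : k * coth (k * (a - c)) ≤ f a := by
  by_contra! hfa
  obtain ⟨B, hB⟩ := isCompact_Icc.bddBelow_image hf.continuousOn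
  obtain ⟨b, hbB, hab, hbc⟩ :=
    (((tendsto_mul_coth_nhdsLT hk).eventually_lt_atBot B).and (Ioo_mem_nhdsLT hac)).exists
  have hfb := (hf.mono (Icc_subset_Icc le_rfl hbc.le)).le_of_hasDerivAt
    (fun x hx => hasDerivAt_mul_coth hk.ne' (hx.2.trans_lt hbc).ne) hk₀ hfa.le b ⟨hab.le, le_rfl⟩
  linarith [hB ⟨b, ⟨hab.le, hbc.le⟩, rfl⟩]

theorem abs_le_mul_coth (hf : RiccatiSubsolution k f (Ioi 0)) (hk : 0 < k) {t : ℝ} (ht : 0 < t) :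
    |f t| ≤ k * coth (k * t) := by
  have hupper : f t ≤ k * coth (k * t) := by
    have hcont : ContinuousAt (fun ε => (k + ε) * coth ((k + ε) * (t - ε))) 0 := by
      refine continuousAt_id.const_add k |>.mul (ContinuousAt.comp (g := coth) ?_ (by fun_prop))
      simpa using (hasDerivAt_coth (mul_pos hk ht).ne').continuousAt
    have hlim : Tendsto (fun ε => (k + ε) * coth ((k + ε) * (t - ε))) (𝓝[>] 0)
        (𝓝 (k * coth (k * t))) := by
      simpa using hcont.tendsto.mono_left nhdsWithin_le_nhds
    refine ge_of_tendsto hlim ?_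
    filter_upwards [Ioo_mem_nhdsGT ht] with ε hε
    exact le_mul_coth (hf.mono fun x hx => hε.1.trans_le hx.1) (by nlinarith [hε.1])
      (by linarith [hε.1]) (by linarith [hε.2])
  have hlower : ∀ k' > k, -k' ≤ f t := fun k' hk' =>
    le_of_tendsto (tendsto_mul_coth_sub_atTop (hk.trans hk') t) <|
      (eventually_gt_atTop t).mono fun c hc =>
        mul_coth_le (hf.mono fun x hx => ht.trans_le hx.1) (by nlinarith) (hk.trans hk') hc
  have hk_le : k ≤ k * coth (k * t) := le_mul_of_one_le_right hk.le (one_le_coth (mul_pos hk ht))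
  have hneg : -k ≤ f t :=
    neg_le.mpr (le_of_forall_gt_imp_ge_of_dense fun k' hk' => neg_le.mp (hlower k' hk'))
  exact abs_le.mpr ⟨by linarith, hupper⟩

end RiccatiSubsolution

namespace ContinuousLinearMap

variable {E : Type*} [NormedAddCommGroup E] [InnerProductSpace ℝ E] {A K : ℝ → E →L[ℝ] E}
  {k : ℝ} {s : Set ℝ}

theorem riccatiSubsolution_rayleighQuotient (hK : ∀ t ∈ s, (K t + k ^ 2 • 1).IsPositive)
    (hA : ∀ t ∈ s, (A t : E →ₗ[ℝ] E).IsSymmetric)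
    (hA' : ∀ t ∈ s, HasDerivAt A (-(A t * A t + K t)) t) (x : E) :
    RiccatiSubsolution k (fun t => (A t).rayleighQuotient x) s := by
  intro t ht
  have hderiv : HasDerivAt (fun t => (A t).rayleighQuotient x)
      (-(‖A t x‖ ^ 2 + ⟪K t x, x⟫_ℝ) / ‖x‖ ^ 2) t := by
    have h := (((hA' t ht).clm_apply (hasDerivAt_const t x)).inner ℝ
      (hasDerivAt_const t x)).div_const (‖x‖ ^ 2)
    refine h.congr_deriv ?_
    rw [inner_zero_right, map_zero, add_zero, zero_add, _root_.neg_apply, _root_.add_apply,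
      mul_apply_eq_comp, inner_neg_left, inner_add_left,
      show ⟪A t (A t x), x⟫_ℝ = ⟪A t x, A t x⟫_ℝ from hA t ht _ _, real_inner_self_eq_norm_sq]
  refine ⟨hderiv.differentiableAt, hderiv.deriv ▸ ?_⟩
  have hKx : -(k ^ 2 * ‖x‖ ^ 2) ≤ ⟪K t x, x⟫_ℝ := by
    have := (hK t ht).re_inner_nonneg_left x
    simp only [_root_.add_apply, _root_.smul_apply, one_apply_eq_self, inner_add_left,
      inner_smul_left, ringHom_apply, inner_self_eq_norm_sq_to_K, RCLike.re_to_real] at this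
    linarith
  have hcs : ⟪A t x, x⟫_ℝ ^ 2 ≤ ‖A t x‖ ^ 2 * ‖x‖ ^ 2 := by
    rw [← mul_pow]
    exact sq_le_sq' (neg_le_of_abs_le (abs_real_inner_le_norm _ _))
      (le_of_abs_le (abs_real_inner_le_norm _ _))
  rcases eq_or_ne x 0 with rfl | hx
  · simp [sq_nonneg]
  have hn : 0 < ‖x‖ ^ 2 := by positivity
  simp only [rayleighQuotient, reApplyInnerSelf_apply, RCLike.re_to_real]
  have hkey : k ^ 2 - (⟪A t x, x⟫_ℝ / ‖x‖ ^ 2) ^ 2 - (-(‖A t x‖ ^ 2 + ⟪K t x, x⟫_ℝ) / ‖x‖ ^ 2) =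
      ((k ^ 2 * ‖x‖ ^ 2 + ⟪K t x, x⟫_ℝ) * ‖x‖ ^ 2 + (‖A t x‖ ^ 2 * ‖x‖ ^ 2 - ⟪A t x, x⟫_ℝ ^ 2)) /
        (‖x‖ ^ 2) ^ 2 := by
    field_simp
    ring
  refine sub_nonneg.mp (hkey ▸ div_nonneg ?_ (sq_nonneg _))
  nlinarith

theorem norm_le_mul_coth_of_riccati (hk : 0 < k) (hK : ∀ t > 0, (K t + k ^ 2 • 1).IsPositive)
    (hA : ∀ t > 0, (A t : E →ₗ[ℝ] E).IsSymmetric)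
    (hA' : ∀ t > 0, HasDerivAt A (-(A t * A t + K t)) t) {t : ℝ} (ht : 0 < t) :
    ‖A t‖ ≤ k * Real.coth (k * t) := by
  rw [norm_eq_iSup_rayleighQuotient _ (hA t ht)]
  exact ciSup_le fun x =>
    (riccatiSubsolution_rayleighQuotient (s := Ioi 0) hK hA hA' x).abs_le_mul_coth hk ht

end ContinuousLinearMap

namespace Matrix

variable {𝕜 : Type*} [RCLike 𝕜] {n : Type*} [Fintype n] [DecidableEq n]

theorem isSymmetric_toEuclideanCLM_iff {M : Matrix n n 𝕜} :
    (toEuclideanCLM (𝕜 := 𝕜) M : EuclideanSpace 𝕜 n →ₗ[𝕜] EuclideanSpace 𝕜 n).IsSymmetric ↔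
      M.IsHermitian := by
  rw [coe_toEuclideanCLM_eq_toEuclideanLin, isSymmetric_toEuclideanLin_iff]

theorem isPositive_toEuclideanCLM_iff {M : Matrix n n 𝕜} :
    (toEuclideanCLM (𝕜 := 𝕜) M).IsPositive ↔ M.PosSemidef := by
  rw [← ContinuousLinearMap.isPositive_toLinearMap_iff, coe_toEuclideanCLM_eq_toEuclideanLin,
    isPositive_toEuclideanLin_iff]

theorem _root_.HasDerivAt.toEuclideanCLM {V : ℝ → Matrix n n ℝ} {V' : Matrix n n ℝ} {t : ℝ}
    (hV : HasDerivAt V V' t) :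
    HasDerivAt (fun t => Matrix.toEuclideanCLM (𝕜 := ℝ) (V t))
      (Matrix.toEuclideanCLM (𝕜 := ℝ) V') t :=
  (Matrix.toEuclideanCLM (𝕜 := ℝ) (n := n)).toAlgEquiv.toLinearMap.toContinuousLinearMap
    |>.hasFDerivAt.comp_hasDerivAt t hV

end Matrix

theorem riccati_bound_general {m : ℕ}
    (K V : ℝ → Matrix (Fin m) (Fin m) ℝ) (k : ℝ) (hk : 0 < k)
    (hKlow : ∀ t > (0 : ℝ), (K t + k ^ 2 • (1 : Matrix (Fin m) (Fin m) ℝ)).PosSemidef)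
    (hVsymm : ∀ t > (0 : ℝ), (V t)ᵀ = V t)
    (hV : ∀ t > (0 : ℝ), HasDerivAt V (-(V t * V t + K t)) t) :
    ∀ t > (0 : ℝ),
      opNorm (V t) ≤ k * (Real.cosh (k * t) / Real.sinh (k * t)) := by
  have hKpos (t : ℝ) (ht : 0 < t) :
      (toEuclideanCLM (𝕜 := ℝ) (K t) + k ^ 2 • 1).IsPositive := by
    simpa using isPositive_toEuclideanCLM_iff.mpr (hKlow t ht)
  have hsymm (t : ℝ) (ht : 0 < t) :
      (toEuclideanCLM (𝕜 := ℝ) (V t) : EuclideanSpace ℝ (Fin m) →ₗ[ℝ] _).IsSymmetric :=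
    isSymmetric_toEuclideanCLM_iff.mpr (isHermitian_iff_isSymm.mpr (hVsymm t ht))
  have hderiv (t : ℝ) (ht : 0 < t) : HasDerivAt (fun t => toEuclideanCLM (𝕜 := ℝ) (V t))
      (-(toEuclideanCLM (𝕜 := ℝ) (V t) * toEuclideanCLM (𝕜 := ℝ) (V t) +
        toEuclideanCLM (𝕜 := ℝ) (K t))) t := by
    simpa using (hV t ht).toEuclideanCLM
  exact fun t ht => ContinuousLinearMap.norm_le_mul_coth_of_riccati hk hKpos hsymm hderiv ht

/-- Hopf–Green Riccati comparison (matrix case): a symmetric solution of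
`V' + V² + K = 0` on `(0,∞)` with `K(t) ≥ −k²·1` satisfies `‖V(t)‖₂ ≤ k coth(kt)`. -/
theorem riccati_bound {m : ℕ}
    (K V : ℝ → Matrix (Fin m) (Fin m) ℝ) (k : ℝ) (hk : 0 < k)
    (hKsymm : ∀ t, (K t)ᵀ = K t)
    (hKlow : ∀ t > (0 : ℝ), (K t + k ^ 2 • (1 : Matrix (Fin m) (Fin m) ℝ)).PosSemidef)
    (hVsymm : ∀ t > (0 : ℝ), (V t)ᵀ = V t)
    (hV : ∀ t > (0 : ℝ), HasDerivAt V (-(V t * V t + K t)) t) :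
    ∀ t > (0 : ℝ),
      opNorm (V t) ≤ k * (Real.cosh (k * t) / Real.sinh (k * t)) :=
  riccati_bound_general K V k hk hKlow hVsymm hV
end
end

section
/- Let A : ℝ → Matrix (Fin m) (Fin m) ℝ solve the Jacobi equation A'' + K·A = 0 with K(t) symmetric, A(0) = 0, A'(0) = I, and suppose A(t) is invertible for all t ≠ 0. Then U(t) := A'(t)·A(t)⁻¹ is a symmetric solution of the Riccati equation U' + U² + K = 0 on (0, ∞). -/
open Matrix MeasureTheory

noncomputable section

attribute [local instance] Matrix.normedAddCommGroup Matrix.normedSpace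

/-! Along the Jacobi flow `A'' = -K A` with `K` symmetric, the Wronskian `Aᵀ A' - A'ᵀ A` is
constant, hence zero since `A 0 = 0`; that is exactly the symmetry of `U = A' A⁻¹`. The Riccati
equation is the product rule together with `(A⁻¹)' = -A⁻¹ A' A⁻¹`. -/

open Filter Topology

section MatrixCalculus

variable {𝕜 : Type*} [NontriviallyNormedField 𝕜] {l n p : Type*} {t : 𝕜}

theorem hasDerivAt_matrix_iff [Fintype n] {f : 𝕜 → Matrix l n 𝕜} {f' : Matrix l n 𝕜} :
    HasDerivAt f f' t ↔ ∀ i j, HasDerivAt (fun s => f s i j) (f' i j) t :=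
  hasDerivAt_pi.trans (forall_congr' fun _ => hasDerivAt_pi)

theorem HasDerivAt.matrix_transpose [Fintype l] [Fintype n] {f : 𝕜 → Matrix l n 𝕜}
    {f' : Matrix l n 𝕜} (hf : HasDerivAt f f' t) : HasDerivAt (fun s => (f s)ᵀ) f'ᵀ t :=
  hasDerivAt_matrix_iff.mpr fun i j => hasDerivAt_matrix_iff.mp hf j i

theorem HasDerivAt.matrix_mul [Fintype n] [Fintype p] {f : 𝕜 → Matrix l n 𝕜}
    {g : 𝕜 → Matrix n p 𝕜} {f' : Matrix l n 𝕜} {g' : Matrix n p 𝕜}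
    (hf : HasDerivAt f f' t) (hg : HasDerivAt g g' t) :
    HasDerivAt (fun s => f s * g s) (f' * g t + f t * g') t := by
  rw [hasDerivAt_matrix_iff] at hf hg ⊢
  intro i j
  simp only [Matrix.mul_apply, Matrix.add_apply, ← Finset.sum_add_distrib]
  exact HasDerivAt.fun_sum fun k _ => (hf i k).mul (hg k j)

theorem HasDerivAt.matrix_inv [Fintype n] [DecidableEq n] {f : 𝕜 → Matrix n n 𝕜}
    {f' : Matrix n n 𝕜} (hf : HasDerivAt f f' t) (ht : IsUnit (f t)) :
    HasDerivAt (fun s => (f s)⁻¹) (-((f t)⁻¹ * f' * (f t)⁻¹)) t := by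
  have hdet : (f t).det ≠ 0 := ((Matrix.isUnit_iff_isUnit_det _).mp ht).ne_zero
  have hcont : ContinuousAt (fun s => (f s)⁻¹) t := by
    refine (continuousAt_matrix_inv (f t) ?_).comp hf.continuousAt
    rw [Ring.inverse_eq_inv']
    exact continuousAt_inv₀ hdet
  -- `B⁻¹ - C⁻¹ = B⁻¹ (C - B) C⁻¹` turns the slope of `f⁻¹` into `-f⁻¹ (slope f) (f t)⁻¹`.
  have hslope : ∀ᶠ s in 𝓝[≠] t,
      (f s)⁻¹ * -slope f t s * (f t)⁻¹ = slope (fun s => (f s)⁻¹) t s := by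
    have hunit : ∀ᶠ s in 𝓝[≠] t, (f s).det ≠ 0 := nhdsWithin_le_nhds <|
      (continuous_id.matrix_det.continuousAt.comp hf.continuousAt).eventually_ne hdet
    filter_upwards [hunit] with s hs
    rw [slope_def_module, slope_def_module, ← smul_neg, neg_sub, Matrix.mul_smul,
      Matrix.smul_mul, mul_sub, sub_mul, nonsing_inv_mul _ (Ne.isUnit hs), one_mul, mul_assoc,
      mul_nonsing_inv _ (Ne.isUnit hdet), mul_one]
  refine hasDerivAt_iff_tendsto_slope.mpr (Tendsto.congr' hslope ?_)
  have hlim := ((hcont.tendsto.mono_left nhdsWithin_le_nhds).mul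
    (hasDerivAt_iff_tendsto_slope.mp hf).neg).mul_const (f t)⁻¹
  simp only [mul_neg, neg_mul] at hlim ⊢
  exact hlim

end MatrixCalculus

section Jacobi

variable {𝕜 : Type*} [NontriviallyNormedField 𝕜] {n : Type*} [Fintype n] {t : 𝕜}

theorem HasDerivAt.riccati_of_jacobi [DecidableEq n] {A A' : 𝕜 → Matrix n n 𝕜}
    {K : Matrix n n 𝕜} (hA : HasDerivAt A (A' t) t) (hA' : HasDerivAt A' (-(K * A t)) t)
    (ht : IsUnit (A t)) :
    HasDerivAt (fun s => A' s * (A s)⁻¹) (-((A' t * (A t)⁻¹) * (A' t * (A t)⁻¹) + K)) t := by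
  convert hA'.matrix_mul (hA.matrix_inv ht) using 1
  rw [neg_mul, mul_nonsing_inv_cancel_right _ _ ((isUnit_iff_isUnit_det _).mp ht)]
  noncomm_ring

def jacobiWronskian (A A' : 𝕜 → Matrix n n 𝕜) (t : 𝕜) : Matrix n n 𝕜 :=
  (A t)ᵀ * A' t - (A' t)ᵀ * A t

theorem hasDerivAt_jacobiWronskian {A A' : 𝕜 → Matrix n n 𝕜} {K : Matrix n n 𝕜} (hK : K.IsSymm)
    (hA : HasDerivAt A (A' t) t) (hA' : HasDerivAt A' (-(K * A t)) t) :
    HasDerivAt (jacobiWronskian A A') 0 t := by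
  refine ((hA.matrix_transpose.matrix_mul hA').sub
    (hA'.matrix_transpose.matrix_mul hA)).congr_deriv ?_
  rw [transpose_neg, transpose_mul, hK.eq]
  noncomm_ring

end Jacobi

theorem jacobiWronskian_eq_zero {n : Type*} [Fintype n] {K A A' : ℝ → Matrix n n ℝ}
    (hK : ∀ t, (K t).IsSymm) (hA : ∀ t, HasDerivAt A (A' t) t)
    (hA' : ∀ t, HasDerivAt A' (-(K t * A t)) t) (hA0 : A 0 = 0) (t : ℝ) :
    jacobiWronskian A A' t = 0 := by
  have hW : ∀ s, HasDerivAt (jacobiWronskian A A') 0 s := fun s =>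
    hasDerivAt_jacobiWronskian (hK s) (hA s) (hA' s)
  rw [is_const_of_deriv_eq_zero (fun s => (hW s).differentiableAt) (fun s => (hW s).deriv) t 0,
    jacobiWronskian, hA0, transpose_zero, zero_mul, mul_zero, sub_zero]

theorem Matrix.isSymm_mul_nonsing_inv {n α : Type*} [Fintype n] [DecidableEq n] [CommRing α]
    {A B : Matrix n n α} (hAB : Aᵀ * B = Bᵀ * A) (hA : IsUnit A) : (B * A⁻¹).IsSymm := by
  have hdet := (isUnit_iff_isUnit_det A).mp hA
  have hBT : Bᵀ = Aᵀ * (B * A⁻¹) := by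
    rw [← mul_assoc, hAB, mul_assoc, mul_nonsing_inv _ hdet, mul_one]
  rw [IsSymm, transpose_mul, transpose_nonsing_inv, hBT, ← mul_assoc,
    nonsing_inv_mul _ (by rwa [det_transpose]), one_mul]

theorem U_riccati_general {m : ℕ}
    (K A A' : ℝ → Matrix (Fin m) (Fin m) ℝ)
    (hKsymm : ∀ t, (K t)ᵀ = K t)
    (hA : ∀ t, HasDerivAt A (A' t) t)
    (hA' : ∀ t, HasDerivAt A' (-(K t * A t)) t)
    (hA0 : A 0 = 0)
    (hinv : ∀ t ≠ (0 : ℝ), IsUnit (A t)) :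
    ∀ t > (0 : ℝ),
      HasDerivAt (fun s => A' s * (A s)⁻¹)
        (-((A' t * (A t)⁻¹) * (A' t * (A t)⁻¹) + K t)) t ∧
      (A' t * (A t)⁻¹)ᵀ = A' t * (A t)⁻¹ := by
  intro t ht
  have hunit := hinv t ht.ne'
  have hW := jacobiWronskian_eq_zero hKsymm hA hA' hA0 t
  exact ⟨(hA t).riccati_of_jacobi (hA' t) hunit, isSymm_mul_nonsing_inv (sub_eq_zero.mp hW) hunit⟩

/-- If `A` solves `A'' + K A = 0` with `K` symmetric, `A(0) = 0`, `A'(0) = 1`, and `A(t)`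
is invertible for `t ≠ 0`, then `U = A' A⁻¹` is a symmetric solution of the Riccati
equation `U' + U² + K = 0` on `(0, ∞)`. -/
theorem U_riccati {m : ℕ}
    (K A A' : ℝ → Matrix (Fin m) (Fin m) ℝ)
    (hK : Continuous K)
    (hKsymm : ∀ t, (K t)ᵀ = K t)
    (hA : ∀ t, HasDerivAt A (A' t) t)
    (hA' : ∀ t, HasDerivAt A' (-(K t * A t)) t)
    (hA0 : A 0 = 0) (hA'0 : A' 0 = 1)
    (hinv : ∀ t ≠ (0 : ℝ), IsUnit (A t)) :
    ∀ t > (0 : ℝ),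
      HasDerivAt (fun s => A' s * (A s)⁻¹)
        (-((A' t * (A t)⁻¹) * (A' t * (A t)⁻¹) + K t)) t ∧
      (A' t * (A t)⁻¹)ᵀ = A' t * (A t)⁻¹ :=
  U_riccati_general K A A' hKsymm hA hA' hA0 hinv
end
end

section
/- In the no-conjugate-points setting with M(s) = ∫ₛ^∞ A(ℓ)⁻¹A(ℓ)⁻¹ᵀ dℓ finite and positive definite, the difference of the two Riccati solutions U = A'A⁻¹ and V = D_{+∞}'D_{+∞}⁻¹ satisfies U(t) − V(t) = A(t)⁻¹ᵀ · M(t)⁻¹ · A(t)⁻¹ for all t > 0. -/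
/-!
Write `M(s) = ∫ₛ^∞ A⁻¹A⁻¹ᵀ` and `D = A M`. By the fundamental theorem of calculus
`M' = -A⁻¹A⁻¹ᵀ`, so the product rule gives `D' = A'M + AM' = A'M - A⁻¹ᵀ`. Since
`D⁻¹ = M⁻¹A⁻¹`, this yields `D'D⁻¹ = A'A⁻¹ - A⁻¹ᵀM⁻¹A⁻¹`.
-/

open Matrix MeasureTheory

noncomputable section

attribute [local instance] Matrix.normedAddCommGroup Matrix.normedSpace

open Set

theorem ContinuousAt.matrix_inv {X n R : Type*} [TopologicalSpace X] [Fintype n] [DecidableEq n]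
    [Field R] [TopologicalSpace R] [IsTopologicalRing R] [ContinuousInv₀ R]
    {A : X → Matrix n n R} {x : X} (hA : ContinuousAt A x) (hx : IsUnit (A x)) :
    ContinuousAt (fun y => (A y)⁻¹) x := by
  have hdet : (A x).det ≠ 0 := ((A x).isUnit_iff_isUnit_det.mp hx).ne_zero
  refine (continuousAt_matrix_inv (A x) ?_).comp hA
  rw [Ring.inverse_eq_inv']
  exact continuousAt_inv₀ hdet

theorem HasDerivAt.matrix_mul_s10 {𝕜 l m n : Type*} [NontriviallyNormedField 𝕜] [CompleteSpace 𝕜]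
    [Fintype l] [Fintype m] [Fintype n]
    {A : 𝕜 → Matrix l m 𝕜} {B : 𝕜 → Matrix m n 𝕜} {A' : Matrix l m 𝕜} {B' : Matrix m n 𝕜}
    {t : 𝕜} (hA : HasDerivAt A A' t) (hB : HasDerivAt B B' t) :
    HasDerivAt (fun s => A s * B s) (A' * B t + A t * B') t := by
  let mulL : Matrix l m 𝕜 →L[𝕜] Matrix m n 𝕜 →L[𝕜] Matrix l n 𝕜 :=
    (LinearMap.mk₂ 𝕜 (· * ·) Matrix.add_mul Matrix.smul_mul Matrix.mul_add
      fun c M N => Matrix.mul_smul M c N).toContinuousBilinearMap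
  have h : HasDerivAt (fun s => A s * B s) (A t * B' + A' * B t) t :=
    mulL.hasDerivAt_of_bilinear (fun _ => hA) (fun _ => hB)
  rwa [add_comm] at h

theorem hasDerivAt_setIntegral_Ioi {E : Type*} [NormedAddCommGroup E] [NormedSpace ℝ E]
    [CompleteSpace E] {f : ℝ → E} {a t : ℝ} {u : Set ℝ} (hat : a < t)
    (hf : IntegrableOn f (Ioi a)) (hu : IsOpen u) (htu : t ∈ u) (hcont : ContinuousOn f u) :
    HasDerivAt (fun s => ∫ x in Ioi s, f x) (-f t) t := by
  have hint : IntervalIntegrable f volume a t :=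
    (intervalIntegrable_iff_integrableOn_Ioc_of_le hat.le).mpr (hf.mono_set Ioc_subset_Ioi_self)
  have hFTC := (intervalIntegral.integral_hasDerivAt_right hint
    (hcont.stronglyMeasurableAtFilter hu t htu) (hcont.continuousAt (hu.mem_nhds htu))).const_sub
    (∫ x in Ioi a, f x)
  refine hFTC.congr_of_eventuallyEq ?_
  filter_upwards [Ioi_mem_nhds hat] with s hs
  rw [← intervalIntegral.integral_Ioi_sub_Ioi hf hs.le, sub_sub_cancel]

theorem Matrix.mul_inv_sub_mul_sub_mul_inv {n R : Type*} [Fintype n] [DecidableEq n] [CommRing R]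
    {M : Matrix n n R} (hM : IsUnit M) (A A' B : Matrix n n R) :
    A' * A⁻¹ - (A' * M - B) * (A * M)⁻¹ = B * M⁻¹ * A⁻¹ := by
  have hMdet : IsUnit M.det := M.isUnit_iff_isUnit_det.mp hM
  rw [Matrix.mul_inv_rev, Matrix.sub_mul, Matrix.mul_assoc A', ← Matrix.mul_assoc M,
    Matrix.mul_nonsing_inv _ hMdet, Matrix.one_mul, Matrix.mul_assoc B]
  abel

theorem riccati_difference_general {m : ℕ}
    (A A' DInf' : ℝ → Matrix (Fin m) (Fin m) ℝ)
    (hA : ∀ t, HasDerivAt A (A' t) t)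
    (hinv : ∀ t ≠ (0 : ℝ), IsUnit (A t))
    (hMint : ∀ s > (0 : ℝ), @IntegrableOn ℝ (Matrix (Fin m) (Fin m) ℝ) _ _
      (@SeminormedAddGroup.toContinuousENorm _ _) (fun ℓ => (A ℓ)⁻¹ * ((A ℓ)⁻¹)ᵀ) (Set.Ioi s) volume)
    (hMpos : ∀ s > (0 : ℝ), (∫ ℓ in Set.Ioi s, (A ℓ)⁻¹ * ((A ℓ)⁻¹)ᵀ).PosDef)
    (hDInf' : ∀ t > (0 : ℝ),
      HasDerivAt (fun s => A s * ∫ ℓ in Set.Ioi s, (A ℓ)⁻¹ * ((A ℓ)⁻¹)ᵀ) (DInf' t) t) :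
    ∀ t > (0 : ℝ),
      A' t * (A t)⁻¹ -
        DInf' t * (A t * ∫ ℓ in Set.Ioi t, (A ℓ)⁻¹ * ((A ℓ)⁻¹)ᵀ)⁻¹ =
      ((A t)⁻¹)ᵀ * (∫ ℓ in Set.Ioi t, (A ℓ)⁻¹ * ((A ℓ)⁻¹)ᵀ)⁻¹ * (A t)⁻¹ := by
  intro t ht
  have hcont : ContinuousOn (fun ℓ => (A ℓ)⁻¹ * ((A ℓ)⁻¹)ᵀ) (Ioi 0) := fun s hs =>
    have hAinv := (hA s).continuousAt.matrix_inv (hinv s (ne_of_gt hs))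
    (hAinv.mul (continuous_id.matrix_transpose.continuousAt.comp hAinv)).continuousWithinAt
  have hM' := hasDerivAt_setIntegral_Ioi (half_lt_self ht) (hMint _ (half_pos ht)) isOpen_Ioi ht
    hcont
  have hDInf't : DInf' t = A' t * (∫ ℓ in Ioi t, (A ℓ)⁻¹ * ((A ℓ)⁻¹)ᵀ) - ((A t)⁻¹)ᵀ := by
    rw [(hDInf' t ht).unique ((hA t).matrix_mul_s10 hM'), mul_neg, ← Matrix.mul_assoc,
      Matrix.mul_nonsing_inv _ ((A t).isUnit_iff_isUnit_det.mp (hinv t ht.ne')),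
      Matrix.one_mul, sub_eq_add_neg]
  rw [hDInf't]
  exact Matrix.mul_inv_sub_mul_sub_mul_inv (hMpos t ht).isUnit _ _ _

/-- With `M(s) = ∫ₛ^∞ A(ℓ)⁻¹A(ℓ)⁻¹ᵀ dℓ` finite positive definite and
`D_∞(s) = A(s)·M(s)` the stable Jacobi field, the difference of the two Riccati
solutions `U = A'A⁻¹` and `V = D_∞'D_∞⁻¹` is `U − V = A⁻¹ᵀ M⁻¹ A⁻¹` on `(0,∞)`. -/
theorem riccati_difference {m : ℕ}
    (K A A' DInf' : ℝ → Matrix (Fin m) (Fin m) ℝ)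
    (hK : Continuous K)
    (hKsymm : ∀ t, (K t)ᵀ = K t)
    (hA : ∀ t, HasDerivAt A (A' t) t)
    (hA' : ∀ t, HasDerivAt A' (-(K t * A t)) t)
    (hA0 : A 0 = 0) (hA'0 : A' 0 = 1)
    (hinv : ∀ t ≠ (0 : ℝ), IsUnit (A t))
    (hMint : ∀ s > (0 : ℝ), @IntegrableOn ℝ (Matrix (Fin m) (Fin m) ℝ) _ _
      (@SeminormedAddGroup.toContinuousENorm _ _) (fun ℓ => (A ℓ)⁻¹ * ((A ℓ)⁻¹)ᵀ) (Set.Ioi s) volume)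
    (hMpos : ∀ s > (0 : ℝ), (∫ ℓ in Set.Ioi s, (A ℓ)⁻¹ * ((A ℓ)⁻¹)ᵀ).PosDef)
    (hDInfInv : ∀ s > (0 : ℝ),
      IsUnit (A s * ∫ ℓ in Set.Ioi s, (A ℓ)⁻¹ * ((A ℓ)⁻¹)ᵀ))
    (hDInf' : ∀ t > (0 : ℝ),
      HasDerivAt (fun s => A s * ∫ ℓ in Set.Ioi s, (A ℓ)⁻¹ * ((A ℓ)⁻¹)ᵀ) (DInf' t) t) :
    ∀ t > (0 : ℝ),
      A' t * (A t)⁻¹ -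
        DInf' t * (A t * ∫ ℓ in Set.Ioi t, (A ℓ)⁻¹ * ((A ℓ)⁻¹)ᵀ)⁻¹ =
      ((A t)⁻¹)ᵀ * (∫ ℓ in Set.Ioi t, (A ℓ)⁻¹ * ((A ℓ)⁻¹)ᵀ)⁻¹ * (A t)⁻¹ :=
  riccati_difference_general A A' DInf' hA hinv hMint hMpos hDInf'
end
end

section
/- Suppose S, T : (0,∞) → Matrix (Fin m) (Fin m) ℝ are symmetric solutions of the Riccati equation with ‖S(t)‖ ≤ k coth(kt) and ‖T(t)‖ ≤ k coth(kt), and suppose S(t) − T(t) = A(t)⁻¹ᵀ M(t)⁻¹ A(t)⁻¹ with M(t) symmetric positive definite. Then ‖A(t)⁻¹‖₂² ≤ 2 ‖M(t)‖₂ · k coth(kt) for all t > 0. -/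
/-!
The difference `S t - T t = A⁻ᵀ M⁻¹ A⁻¹` has norm at most `2 k coth (k t)`, so it suffices that
`‖B‖² ≤ ‖M‖ ‖Bᵀ M⁻¹ B‖` for positive definite `M`. Testing `Bᵀ M⁻¹ B` against `x` reduces this to
`‖y‖² ≤ ‖M‖ ⟪y, M⁻¹ y⟫`, i.e. `M⁻¹ ≥ ‖M‖⁻¹ I`. With `y = M x` this is `‖M x‖² ≤ ‖M‖ ⟪x, M x⟫`,
which is Cauchy–Schwarz for the positive semidefinite form `⟪x, M z⟫`:
`‖M x‖⁴ = ⟪x, M (M x)⟫² ≤ ⟪x, M x⟫ ⟪M x, M (M x)⟫ ≤ ⟪x, M x⟫ ‖M‖ ‖M x‖²`.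
-/

open Matrix MeasureTheory

noncomputable section

attribute [local instance] Matrix.normedAddCommGroup Matrix.normedSpace

open scoped RealInnerProductSpace

namespace ContinuousLinearMap

variable {E F : Type*} [NormedAddCommGroup E] [InnerProductSpace ℝ E]
  [NormedAddCommGroup F] [InnerProductSpace ℝ F]

lemma IsPositive.norm_apply_sq_le {T : E →L[ℝ] E} (hT : T.IsPositive) (x : E) :
    ‖T x‖ ^ 2 ≤ ‖T‖ * ⟪x, T x⟫ := by
  have hx : 0 ≤ ⟪x, T x⟫ := hT.re_inner_nonneg_right x
  have hself : ⟪x, T (T x)⟫ = ‖T x‖ ^ 2 := by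
    rw [← hT.inner_left_eq_inner_right, real_inner_self_eq_norm_sq]
  have hcs := LinearMap.BilinForm.apply_mul_apply_le_of_forall_zero_le
    ((innerₗ E).compl₂ (T : E →ₗ[ℝ] E)) (fun y ↦ hT.re_inner_nonneg_right y) x (T x)
  simp only [LinearMap.compl₂_apply, innerₗ_apply_apply, coe_coe, hself,
    real_inner_self_eq_norm_sq] at hcs
  rcases (sq_nonneg ‖T x‖).eq_or_lt with h | h
  · rw [← h]
    exact mul_nonneg (norm_nonneg T) hx
  refine le_of_mul_le_mul_right (hcs.trans ?_) h
  calc ⟪x, T x⟫ * ⟪T x, T (T x)⟫ ≤ ⟪x, T x⟫ * (‖T x‖ * (‖T‖ * ‖T x‖)) := by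
        gcongr
        exact (real_inner_le_norm _ _).trans (by gcongr; exact T.le_opNorm _)
    _ = ‖T‖ * ⟪x, T x⟫ * ‖T x‖ ^ 2 := by ring

lemma IsPositive.norm_sq_le_mul_inner_of_mul_eq_one {T T' : E →L[ℝ] E} (hT : T.IsPositive)
    (hTT' : T * T' = 1) (y : E) : ‖y‖ ^ 2 ≤ ‖T‖ * ⟪y, T' y⟫ := by
  have hy : T (T' y) = y := DFunLike.congr_fun hTT' y
  simpa [hy, real_inner_comm] using hT.norm_apply_sq_le (T' y)

lemma opNorm_sq_le_of_norm_sq_le_mul_inner [CompleteSpace E] [CompleteSpace F]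
    (B : E →L[ℝ] F) (P : F →L[ℝ] F) {c : ℝ} (hc : 0 ≤ c)
    (hP : ∀ y, ‖y‖ ^ 2 ≤ c * ⟪y, P y⟫) :
    ‖B‖ ^ 2 ≤ c * ‖adjoint B ∘L P ∘L B‖ := by
  set D := c * ‖adjoint B ∘L P ∘L B‖
  have hD : 0 ≤ D := by positivity
  have hBx (x : E) : ‖B x‖ ^ 2 ≤ D * ‖x‖ ^ 2 :=
    calc ‖B x‖ ^ 2 ≤ c * ⟪x, (adjoint B ∘L P ∘L B) x⟫ := by
          simpa [adjoint_inner_right] using hP (B x)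
      _ ≤ c * (‖adjoint B ∘L P ∘L B‖ * ‖x‖ ^ 2) := by
          gcongr
          exact (real_inner_le_norm _ _).trans <|
            (mul_le_mul_of_nonneg_left (le_opNorm _ x) (norm_nonneg x)).trans_eq (by ring)
      _ = D * ‖x‖ ^ 2 := by ring
  have hB : ‖B‖ ≤ √D := opNorm_le_bound _ (Real.sqrt_nonneg D) fun x ↦
    (pow_le_pow_iff_left₀ (norm_nonneg _) (by positivity) two_ne_zero).mp <| by
      rw [mul_pow, Real.sq_sqrt hD]; exact hBx x
  calc ‖B‖ ^ 2 ≤ √D ^ 2 := by gcongr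
    _ = D := Real.sq_sqrt hD

end ContinuousLinearMap

section opNorm

variable {m : ℕ}

lemma opNorm_nonneg (X : Matrix (Fin m) (Fin m) ℝ) : 0 ≤ opNorm X :=
  norm_nonneg _

lemma opNorm_sub_le (X Y : Matrix (Fin m) (Fin m) ℝ) : opNorm (X - Y) ≤ opNorm X + opNorm Y := by
  simpa only [opNorm, map_sub] using norm_sub_le _ _

end opNorm

namespace Matrix

variable {m : ℕ}

lemma toEuclideanCLM_transpose (X : Matrix (Fin m) (Fin m) ℝ) :
    toEuclideanCLM (𝕜 := ℝ) Xᵀ = ContinuousLinearMap.adjoint (toEuclideanCLM (𝕜 := ℝ) X) := by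
  rw [← ContinuousLinearMap.star_eq_adjoint, ← map_star, star_eq_conjTranspose,
    conjTranspose_eq_transpose_of_trivial]

lemma PosSemidef.isPositive_toEuclideanCLM {M : Matrix (Fin m) (Fin m) ℝ} (hM : M.PosSemidef) :
    (toEuclideanCLM (𝕜 := ℝ) M).IsPositive :=
  isPositive_toEuclideanLin_iff.mpr hM

lemma PosDef.opNorm_sq_le_opNorm_mul_opNorm_transpose_mul_inv_mul {M : Matrix (Fin m) (Fin m) ℝ}
    (hM : M.PosDef) (B : Matrix (Fin m) (Fin m) ℝ) :
    opNorm B ^ 2 ≤ opNorm M * opNorm (Bᵀ * M⁻¹ * B) := by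
  have hMM : toEuclideanCLM (𝕜 := ℝ) M * toEuclideanCLM (𝕜 := ℝ) M⁻¹ = 1 := by
    rw [← map_mul, mul_nonsing_inv _ ((isUnit_iff_isUnit_det M).mp hM.isUnit), map_one]
  simpa only [opNorm, map_mul, toEuclideanCLM_transpose, ContinuousLinearMap.mul_def,
    ContinuousLinearMap.comp_assoc] using
    ContinuousLinearMap.opNorm_sq_le_of_norm_sq_le_mul_inner _ _ (opNorm_nonneg M)
      (hM.posSemidef.isPositive_toEuclideanCLM.norm_sq_le_mul_inner_of_mul_eq_one hMM)

end Matrix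

theorem inverse_norm_bound_general {m : ℕ}
    (S T A M : ℝ → Matrix (Fin m) (Fin m) ℝ) (k : ℝ)
    (hSb : ∀ t > (0 : ℝ), opNorm (S t) ≤ k * (Real.cosh (k * t) / Real.sinh (k * t)))
    (hTb : ∀ t > (0 : ℝ), opNorm (T t) ≤ k * (Real.cosh (k * t) / Real.sinh (k * t)))
    (hMpos : ∀ t > (0 : ℝ), (M t).PosDef)
    (hdiff : ∀ t > (0 : ℝ), S t - T t = ((A t)⁻¹)ᵀ * (M t)⁻¹ * (A t)⁻¹) :
    ∀ t > (0 : ℝ),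
      opNorm ((A t)⁻¹) ^ 2 ≤
        2 * opNorm (M t) * (k * (Real.cosh (k * t) / Real.sinh (k * t))) := by
  intro t ht
  calc opNorm ((A t)⁻¹) ^ 2 ≤ opNorm (M t) * opNorm (S t - T t) := by
        rw [hdiff t ht]
        exact (hMpos t ht).opNorm_sq_le_opNorm_mul_opNorm_transpose_mul_inv_mul _
    _ ≤ opNorm (M t) * (k * (Real.cosh (k * t) / Real.sinh (k * t)) +
          k * (Real.cosh (k * t) / Real.sinh (k * t))) := by
        gcongr
        · exact opNorm_nonneg _
        · exact (opNorm_sub_le _ _).trans (add_le_add (hSb t ht) (hTb t ht))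
    _ = 2 * opNorm (M t) * (k * (Real.cosh (k * t) / Real.sinh (k * t))) := by ring

/-- If `S, T` are symmetric Riccati solutions bounded by `k coth(kt)` whose
difference is `A⁻¹ᵀ M⁻¹ A⁻¹` with `M(t)` symmetric positive definite, then
`‖A(t)⁻¹‖₂² ≤ 2‖M(t)‖₂ · k coth(kt)`. -/
theorem inverse_norm_bound {m : ℕ}
    (K S T A M : ℝ → Matrix (Fin m) (Fin m) ℝ) (k : ℝ) (hk : 0 < k)
    (hKsymm : ∀ t, (K t)ᵀ = K t)
    (hS : ∀ t > (0 : ℝ), HasDerivAt S (-(S t * S t + K t)) t)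
    (hT : ∀ t > (0 : ℝ), HasDerivAt T (-(T t * T t + K t)) t)
    (hSsymm : ∀ t > (0 : ℝ), (S t)ᵀ = S t)
    (hTsymm : ∀ t > (0 : ℝ), (T t)ᵀ = T t)
    (hSb : ∀ t > (0 : ℝ), opNorm (S t) ≤ k * (Real.cosh (k * t) / Real.sinh (k * t)))
    (hTb : ∀ t > (0 : ℝ), opNorm (T t) ≤ k * (Real.cosh (k * t) / Real.sinh (k * t)))
    (hAinv : ∀ t > (0 : ℝ), IsUnit (A t))
    (hMpos : ∀ t > (0 : ℝ), (M t).PosDef)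
    (hdiff : ∀ t > (0 : ℝ), S t - T t = ((A t)⁻¹)ᵀ * (M t)⁻¹ * (A t)⁻¹) :
    ∀ t > (0 : ℝ),
      opNorm ((A t)⁻¹) ^ 2 ≤
        2 * opNorm (M t) * (k * (Real.cosh (k * t) / Real.sinh (k * t))) :=
  inverse_norm_bound_general S T A M k hSb hTb hMpos hdiff
end
end
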